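/- arXiv:1612.01767 — 2 statements merged into one kernel-verified Lean document; each statement's English description precedes it below -/
import Mathlib

section
/- For nonnegative n×n real matrices A₁, …, A_m, the spectral radius of the Hadamard product satisfies ρ(A₁ ∘ A₂ ∘ ⋯ ∘ A_m) ≤ ρ(A₁A₂⋯A_m). -/
/-!
Write `H = A₁ ∘ ⋯ ∘ A_m`, `P = A₁ ⋯ A_m`, and `Q_c = A_c A_{c+1} ⋯ A_{c-1}` (indices mod `m`)
for the cyclic rotations of `P`. The Hadamard product is invariant under cyclic shifts of its
factors, so `H ^ m` is a product of `m` Hadamard products, one per shift. For nonnegative matrices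
a product of Hadamard products is entrywise at most the Hadamard product of the products, whence
`H ^ (m t) ≤ Q_0 ^ t ∘ ⋯ ∘ Q_{m-1} ^ t` entrywise. The ℓ∞ operator norm is monotone on
nonnegative matrices and submultiplicative for Hadamard products, so
`‖H ^ (m t)‖ ≤ ∏_c ‖Q_c ^ t‖`, and Gelfand's formula turns this into
`ρ(H) ^ m ≤ ∏_c ρ(Q_c) = ρ(P) ^ m`, as `ρ(X Y) = ρ(Y X)`.
-/

open Matrix

/-- Spectral radius of a real matrix: max modulus of its (complex) eigenvalues. -/
noncomputable def specRad {N : Type*} [Fintype N] [DecidableEq N] (A : Matrix N N ℝ) : ℝ :=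
  (spectralRadius ℂ (A.map Complex.ofReal)).toReal

/-- Operator norm induced by the Euclidean (ℓ²) norm. -/
noncomputable def l2OpNorm {N : Type*} [Fintype N] [DecidableEq N] (A : Matrix N N ℝ) : ℝ :=
  ‖Matrix.toEuclideanCLM (𝕜 := ℝ) A‖

/-- Entrywise α-th power (with the convention 0^0 = 1, as for `Real.rpow`). -/
noncomputable def hadPow {N : Type*} (A : Matrix N N ℝ) (α : ℝ) : Matrix N N ℝ :=
  fun i j => A i j ^ α

open Filter Topology

attribute [local instance] Matrix.linftyOpSeminormedAddCommGroup Matrix.linftyOpNormedRing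
  Matrix.linftyOpNormedAlgebra

theorem spectrum.spectralRadius_mul_comm {𝕜 A : Type*} [NormedField 𝕜] [Ring A] [Algebra 𝕜 A]
    (a b : A) : spectralRadius 𝕜 (a * b) = spectralRadius 𝕜 (b * a) := by
  have key : ∀ x y : A, spectralRadius 𝕜 (x * y) ≤ spectralRadius 𝕜 (y * x) := by
    refine fun x y => iSup₂_le fun k hk => ?_
    rcases eq_or_ne k 0 with rfl | hk0
    · simp
    · have : k ∈ spectrum 𝕜 (y * x) \ {0} := (spectrum.nonzero_mul_comm (𝕜 := 𝕜) x y) ▸ ⟨hk, hk0⟩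
      exact le_iSup₂ (f := fun k _ => (‖k‖₊ : ENNReal)) k this.1
  exact (key a b).antisymm (key b a)

theorem Finset.sum_prod_le_prod_sum {ι κ R : Type*} [CommSemiring R] [PartialOrder R]
    [IsOrderedRing R] {s : Finset ι} (hs : s.Nonempty) (t : Finset κ) {f : ι → κ → R}
    (hf : ∀ i ∈ s, ∀ k ∈ t, 0 ≤ f i k) :
    ∑ k ∈ t, ∏ i ∈ s, f i k ≤ ∏ i ∈ s, ∑ k ∈ t, f i k := by
  classical
  obtain ⟨a, ha⟩ := hs
  calc ∑ k ∈ t, ∏ i ∈ s, f i k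
      = ∑ k ∈ t, f a k * ∏ i ∈ s.erase a, f i k :=
        Finset.sum_congr rfl fun k _ => (Finset.mul_prod_erase s (f · k) ha).symm
    _ ≤ ∑ k ∈ t, f a k * ∏ i ∈ s.erase a, ∑ k' ∈ t, f i k' := by
        refine Finset.sum_le_sum fun k hk => mul_le_mul_of_nonneg_left ?_ (hf a ha k hk)
        refine Finset.prod_le_prod (fun i hi => hf i (Finset.mem_of_mem_erase hi) k hk)
          fun i hi => ?_
        exact Finset.single_le_sum (hf i (Finset.mem_of_mem_erase hi)) hk
    _ = ∏ i ∈ s, ∑ k ∈ t, f i k := by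
        rw [← Finset.sum_mul, Finset.mul_prod_erase s (fun i => ∑ k ∈ t, f i k) ha]

theorem List.ofFn_add_left_eq_rotate {α : Type*} {m : ℕ} (f : Fin m → α) (c : Fin m) :
    List.ofFn (fun s => f (c + s)) = (List.ofFn f).rotate c := by
  refine List.ext_getElem (by simp) fun k h₁ h₂ => ?_
  simp only [List.getElem_ofFn, List.getElem_rotate, List.length_ofFn]
  congr 1
  ext
  simp [Fin.val_add, Nat.add_comm]

def cyclicProd {M : Type*} [Monoid M] {m : ℕ} (A : Fin m → M) (c : Fin m) : M :=
  (List.ofFn fun s => A (c + s)).prod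

namespace Matrix

variable {ι n p R : Type*} [Fintype ι]

def hadamardProd [CommMonoid R] (A : ι → Matrix n p R) : Matrix n p R :=
  of fun i j => ∏ k, A k i j

@[simp]
theorem hadamardProd_apply [CommMonoid R] (A : ι → Matrix n p R) (i : n) (j : p) :
    hadamardProd A i j = ∏ k, A k i j := rfl

theorem hadamardProd_one [Nonempty ι] [DecidableEq n] [CommMonoidWithZero R] :
    hadamardProd (1 : ι → Matrix n n R) = 1 := by
  ext i j
  by_cases h : i = j <;> simp [one_apply, h]

section OrderedSemiring

variable [CommSemiring R] [PartialOrder R] [IsOrderedRing R]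

theorem hadamardProd_apply_nonneg {A : ι → Matrix n p R} (hA : ∀ k i j, 0 ≤ A k i j) (i : n)
    (j : p) : 0 ≤ hadamardProd A i j :=
  Finset.prod_nonneg fun k _ => hA k i j

variable [Fintype n]

theorem hadamardProd_mul_hadamardProd_apply_le [Nonempty ι] {X Y : ι → Matrix n n R}
    (hX : ∀ k i j, 0 ≤ X k i j) (hY : ∀ k i j, 0 ≤ Y k i j) (i j : n) :
    (hadamardProd X * hadamardProd Y) i j ≤ hadamardProd (X * Y) i j := by
  simp only [mul_apply, hadamardProd_apply, Pi.mul_apply, ← Finset.prod_mul_distrib]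
  exact Finset.sum_prod_le_prod_sum Finset.univ_nonempty _ fun k _ l _ =>
    mul_nonneg (hX k i l) (hY k l j)

variable [DecidableEq n]

theorem list_prod_apply_nonneg {L : List (Matrix n n R)} (hL : ∀ M ∈ L, ∀ i j, 0 ≤ M i j)
    (i j : n) : 0 ≤ L.prod i j := by
  induction L generalizing i j with
  | nil => by_cases h : i = j <;> simp [h]
  | cons M L ih =>
    simp only [List.mem_cons, forall_eq_or_imp] at hL
    rw [List.prod_cons, mul_apply]
    exact Finset.sum_nonneg fun l _ => mul_nonneg (hL.1 i l) (ih hL.2 l j)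

theorem list_prod_map_hadamardProd_apply_le [Nonempty ι] (L : List (ι → Matrix n n R))
    (hL : ∀ X ∈ L, ∀ k i j, 0 ≤ X k i j) (i j : n) :
    (L.map hadamardProd).prod i j ≤ hadamardProd L.prod i j := by
  induction L generalizing i j with
  | nil => rw [List.map_nil, List.prod_nil, List.prod_nil, hadamardProd_one]
  | cons X L ih =>
    simp only [List.mem_cons, forall_eq_or_imp] at hL
    have hLprod : ∀ k i j, 0 ≤ L.prod k i j := fun k => by
      rw [Pi.list_prod_apply]
      exact list_prod_apply_nonneg fun M hM => by
        obtain ⟨Y, hY, rfl⟩ := List.mem_map.mp hM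
        exact hL.2 Y hY k
    rw [List.map_cons, List.prod_cons, List.prod_cons]
    calc (hadamardProd X * (L.map hadamardProd).prod) i j
        ≤ (hadamardProd X * hadamardProd L.prod) i j := by
          simp only [mul_apply]
          refine Finset.sum_le_sum fun l _ => mul_le_mul_of_nonneg_left (ih hL.2 l j) ?_
          exact hadamardProd_apply_nonneg hL.1 i l
      _ ≤ hadamardProd (X * L.prod) i j :=
          hadamardProd_mul_hadamardProd_apply_le hL.1 hLprod i j

theorem hadamardProd_pow_mul_apply_le {m : ℕ} [NeZero m] {A : Fin m → Matrix n n R}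
    (hA : ∀ k i j, 0 ≤ A k i j) (t : ℕ) (i j : n) :
    (hadamardProd A ^ (m * t)) i j ≤ hadamardProd (cyclicProd A ^ t) i j := by
  set rot : List (Fin m → Matrix n n R) := List.ofFn fun s c => A (c + s)
  have hrot : rot.map hadamardProd = List.replicate m (hadamardProd A) := by
    rw [List.map_ofFn, ← List.ofFn_const]
    congr 1
    funext s
    ext i j
    exact Fintype.prod_equiv (Equiv.addRight s) _ _ fun _ => rfl
  have hcyc : rot.prod = cyclicProd A := by
    funext c
    rw [Pi.list_prod_apply, List.map_ofFn]
    rfl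
  have h := list_prod_map_hadamardProd_apply_le (List.replicate t rot).flatten ?_ i j
  · simpa only [List.map_flatten, List.map_replicate, hrot, List.prod_flatten,
      List.prod_replicate, ← pow_mul, hcyc] using h
  · intro X hX
    obtain ⟨-, s, rfl⟩ : t ≠ 0 ∧ ∃ s, (fun c => A (c + s)) = X := by simpa [rot] using hX
    exact fun c => hA _

end OrderedSemiring

section LinftyOpNorm

variable [Fintype n]

theorem linfty_opNorm_le_of_norm_apply_le [Fintype p] [SeminormedAddCommGroup R]
    {A B : Matrix n p R} (h : ∀ i j, ‖A i j‖ ≤ ‖B i j‖) : ‖A‖ ≤ ‖B‖ := by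
  rw [linfty_opNorm_def, linfty_opNorm_def, NNReal.coe_le_coe]
  exact Finset.sup_mono_fun fun i _ => Finset.sum_le_sum fun j _ => h i j

theorem linfty_opNorm_hadamardProd_le [Nonempty ι] [Fintype p] [NormedCommRing R]
    (A : ι → Matrix n p R) : ‖hadamardProd A‖ ≤ ∏ k, ‖A k‖ := by
  simp only [linfty_opNorm_def, ← NNReal.coe_prod, NNReal.coe_le_coe]
  refine Finset.sup_le fun i _ => ?_
  calc ∑ j, ‖hadamardProd A i j‖₊ ≤ ∑ j, ∏ k, ‖A k i j‖₊ :=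
        Finset.sum_le_sum fun j _ => Finset.nnnorm_prod_le' _ Finset.univ_nonempty _
    _ ≤ ∏ k, ∑ j, ‖A k i j‖₊ :=
        Finset.sum_prod_le_prod_sum Finset.univ_nonempty _ fun _ _ _ _ => zero_le
    _ ≤ ∏ k, Finset.univ.sup fun i => ∑ j, ‖A k i j‖₊ :=
        Finset.prod_le_prod' fun k _ =>
          Finset.le_sup (f := fun i => ∑ j, ‖A k i j‖₊) (Finset.mem_univ i)

theorem norm_hadamardProd_pow_mul_le [DecidableEq n] {m : ℕ} [NeZero m]
    {A : Fin m → Matrix n n ℝ} (hA : ∀ k i j, 0 ≤ A k i j) (t : ℕ) :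
    ‖hadamardProd A ^ (m * t)‖ ≤ ∏ c, ‖cyclicProd A c ^ t‖ := by
  refine (linfty_opNorm_le_of_norm_apply_le fun i j => ?_).trans
    (linfty_opNorm_hadamardProd_le _)
  rw [Real.norm_of_nonneg (pow_apply_nonneg (hadamardProd_apply_nonneg hA) _ i j)]
  exact (hadamardProd_pow_mul_apply_le hA t i j).trans (Real.le_norm_self _)

end LinftyOpNorm

end Matrix

section SpectralRadius

variable {N : Type*} [Fintype N] [DecidableEq N]

theorem specRad_eq_spectralRadius_mapMatrix (X : Matrix N N ℝ) :
    specRad X = (spectralRadius ℂ (Complex.ofRealHom.mapMatrix X)).toReal := rfl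

theorem specRad_mul_comm (X Y : Matrix N N ℝ) : specRad (X * Y) = specRad (Y * X) := by
  rw [specRad_eq_spectralRadius_mapMatrix, specRad_eq_spectralRadius_mapMatrix, map_mul, map_mul,
    spectrum.spectralRadius_mul_comm]

theorem specRad_list_prod_rotate (l : List (Matrix N N ℝ)) (k : ℕ) :
    specRad (l.rotate k).prod = specRad l.prod := by
  rw [List.rotate_eq_drop_append_take_mod, List.prod_append, specRad_mul_comm,
    List.prod_take_mul_prod_drop]

theorem specRad_cyclicProd {m : ℕ} (A : Fin m → Matrix N N ℝ) (c : Fin m) :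
    specRad (cyclicProd A c) = specRad (List.ofFn A).prod := by
  rw [cyclicProd, List.ofFn_add_left_eq_rotate, specRad_list_prod_rotate]

theorem norm_mapMatrix_ofRealHom (X : Matrix N N ℝ) : ‖Complex.ofRealHom.mapMatrix X‖ = ‖X‖ := by
  rw [Matrix.linfty_opNorm_def, Matrix.linfty_opNorm_def]
  simp [Complex.nnnorm_real]

theorem tendsto_norm_pow_rpow_one_div_specRad (X : Matrix N N ℝ) :
    Tendsto (fun k : ℕ => ‖X ^ k‖ ^ (1 / k : ℝ)) atTop (𝓝 (specRad X)) := by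
  rw [specRad_eq_spectralRadius_mapMatrix]
  -- not `spectralRadius_le_nnnorm`: the ℓ∞ operator norm has `‖1‖ = 0` when `N` is empty
  have hfin : spectralRadius ℂ (Complex.ofRealHom.mapMatrix X) ≠ ⊤ := by
    refine ((spectrum.spectralRadius_le_pow_nnnorm_pow_one_div ℂ _ 0).trans_lt ?_).ne
    exact ENNReal.mul_lt_top (by simp) (by simp)
  refine ((ENNReal.tendsto_toReal hfin).comp
    (spectrum.pow_norm_pow_one_div_tendsto_nhds_spectralRadius _)).congr fun k => ?_
  rw [Function.comp_apply, ENNReal.toReal_ofReal (by positivity), ← map_pow,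
    norm_mapMatrix_ofRealHom]

theorem tendsto_norm_pow_mul_rpow_one_div_specRad_pow (X : Matrix N N ℝ) {m : ℕ} (hm : 0 < m) :
    Tendsto (fun t : ℕ => ‖X ^ (m * t)‖ ^ (1 / t : ℝ)) atTop (𝓝 (specRad X ^ m)) := by
  refine (((tendsto_norm_pow_rpow_one_div_specRad X).comp (tendsto_id.nsmul_atTop hm)).pow
    m).congr fun t => ?_
  rw [Function.comp_apply, id, smul_eq_mul, ← Real.rpow_mul_natCast (norm_nonneg _),
    one_div_mul_eq_div, Nat.cast_mul, div_mul_cancel_left₀ (by exact_mod_cast hm.ne'), one_div]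

theorem specRad_pow_le_prod_specRad {ι : Type*} [Fintype ι] {m : ℕ} (hm : 0 < m)
    {X : Matrix N N ℝ} {Y : ι → Matrix N N ℝ} (h : ∀ t, ‖X ^ (m * t)‖ ≤ ∏ c, ‖Y c ^ t‖) :
    specRad X ^ m ≤ ∏ c, specRad (Y c) := by
  refine le_of_tendsto_of_tendsto' (tendsto_norm_pow_mul_rpow_one_div_specRad_pow X hm)
    (tendsto_finsetProd _ fun c _ => tendsto_norm_pow_rpow_one_div_specRad (Y c)) fun t => ?_
  rw [Real.finsetProd_rpow _ _ fun c _ => norm_nonneg _]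
  gcongr
  exact h t

end SpectralRadius

theorem stmt1 {m : ℕ} (hm : 0 < m) {N : Type*} [Fintype N] [DecidableEq N]
    (A : Fin m → Matrix N N ℝ) (hA : ∀ k, ∀ i j, 0 ≤ A k i j) :
    specRad (fun i j => ∏ k, A k i j) ≤ specRad (List.ofFn A).prod := by
  have : NeZero m := ⟨hm.ne'⟩
  have h := specRad_pow_le_prod_specRad hm (Matrix.norm_hadamardProd_pow_mul_le hA)
  simp only [specRad_cyclicProd, Finset.prod_const, Finset.card_univ, Fintype.card_fin] at h
  exact le_of_pow_le_pow_left₀ hm.ne' ENNReal.toReal_nonneg h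
end

section
/- Let A₁, …, A_m be nonnegative n×n real matrices, α₁, …, α_m > 0 with Σα_j = 1, and S_j = A_jᵀ A_j. Then ‖A₁^{(α₁)} ∘ ⋯ ∘ A_m^{(α_m)}‖ ≤ ρ(S₁^{(α₁)} ∘ ⋯ ∘ S_m^{(α_m)})^{1/2} ≤ ‖A₁‖^{α₁} ⋯ ‖A_m‖^{α_m}, where ‖·‖ is the Euclidean operator norm. -/
open Matrix

/-- Hadamard weighted geometric mean `A₁^{(α₁)} ∘ ⋯ ∘ A_m^{(α_m)}`. -/
noncomputable def hadGeo {m : ℕ} {N : Type*} (A : Fin m → Matrix N N ℝ) (α : Fin m → ℝ) :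
    Matrix N N ℝ :=
  fun i j => ∏ k, (A k i j) ^ (α k)

/-!
Hölder's inequality applied entrywise gives `(Bᵀ B)ᵢⱼ ≤ Gᵢⱼ` for `B = A₁^{(α₁)} ∘ ⋯ ∘ A_m^{(α_m)}`
and `G = S₁^{(α₁)} ∘ ⋯ ∘ S_m^{(α_m)}`, and, by induction, `(Gⁿ)ᵢⱼ ≤ ∏ₖ ((Sₖⁿ)ᵢⱼ)^{αₖ} ≤
(∏ₖ ‖Sₖ‖^{αₖ})ⁿ`. By Gelfand's formula the entries of `Cⁿ` grow at most like `ρ(C)ⁿ` up to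
subexponential factors, and conversely such a growth bound bounds `ρ(C)`. This makes `ρ` monotone
on entrywise nonnegative matrices and yields `ρ(G) ≤ ∏ₖ ‖Sₖ‖^{αₖ} = (∏ₖ ‖Aₖ‖^{αₖ})²`. For a
symmetric `M`, `‖M‖^{2ᵏ} = ‖M^{2ᵏ}‖` shows `‖M‖ ≤ ρ(M)`, so `‖B‖² = ‖Bᵀ B‖ ≤ ρ(Bᵀ B) ≤ ρ(G)`.
-/

open Filter Topology Finset
open scoped Matrix.Norms.L2Operator

lemma le_of_frequently_pow_le_mul_pow {a b K : ℝ} (hb : 0 ≤ b)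
    (h : ∃ᶠ n in atTop, a ^ n ≤ K * b ^ n) : a ≤ b := by
  by_contra! hab
  have ha : 0 < a := hb.trans_lt hab
  have hlim : Tendsto (fun n : ℕ => K * (b / a) ^ n) atTop (𝓝 0) := by
    simpa using (tendsto_pow_atTop_nhds_zero_of_lt_one (div_nonneg hb ha.le)
      ((div_lt_one ha).2 hab)).const_mul K
  obtain ⟨n, hn, hlt⟩ := (h.and_eventually (hlim.eventually_lt_const one_pos)).exists
  rw [div_pow, mul_div_assoc', div_lt_one (pow_pos ha n)] at hlt
  exact hn.not_gt hlt

lemma Real.sum_prod_rpow_le_prod_sum_rpow {ι κ : Type*} [Fintype κ] (s : Finset ι)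
    {f : κ → ι → ℝ} (hf : ∀ k i, 0 ≤ f k i) {w : κ → ℝ} (hw : ∀ k, 0 < w k)
    (hw1 : ∑ k, w k = 1) :
    ∑ i ∈ s, ∏ k, f k i ^ w k ≤ ∏ k, (∑ i ∈ s, f k i) ^ w k := by
  by_cases hT : ∀ k, 0 < ∑ i ∈ s, f k i
  · set T := fun k => ∑ i ∈ s, f k i
    set P := ∏ k, T k ^ w k
    have hP : 0 < P := prod_pos fun k _ => Real.rpow_pos_of_pos (hT k) _
    have amgm : ∀ i, ∏ k, f k i ^ w k ≤ P * ∑ k, w k * (f k i / T k) := by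
      intro i
      rw [← div_le_iff₀' hP, ← prod_div_distrib]
      calc ∏ k, f k i ^ w k / T k ^ w k = ∏ k, (f k i / T k) ^ w k :=
            prod_congr rfl fun k _ => (Real.div_rpow (hf k i) (hT k).le _).symm
        _ ≤ _ := Real.geom_mean_le_arith_mean_weighted univ w _ (fun k _ => (hw k).le) hw1
            fun k _ => div_nonneg (hf k i) (hT k).le
    calc ∑ i ∈ s, ∏ k, f k i ^ w k ≤ ∑ i ∈ s, P * ∑ k, w k * (f k i / T k) :=
          sum_le_sum fun i _ => amgm i
      _ = P * ∑ k, w k * (T k / T k) := by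
          rw [← mul_sum, sum_comm]
          simp_rw [← mul_sum, ← sum_div]
          rfl
      _ = P := by
          rw [sum_congr rfl fun k _ => by rw [div_self (hT k).ne', mul_one], hw1, mul_one]
  · obtain ⟨k₀, hk₀⟩ := not_forall.1 hT
    replace hk₀ := not_lt.1 hk₀
    have hzero : ∀ i ∈ s, f k₀ i = 0 := (sum_eq_zero_iff_of_nonneg fun i _ => hf k₀ i).1
      (hk₀.antisymm (sum_nonneg fun i _ => hf k₀ i))
    calc ∑ i ∈ s, ∏ k, f k i ^ w k = 0 := sum_eq_zero fun i hi =>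
          prod_eq_zero (mem_univ k₀) (by rw [hzero i hi, Real.zero_rpow (hw k₀).ne'])
      _ ≤ _ := prod_nonneg fun k _ => Real.rpow_nonneg (sum_nonneg fun i _ => hf k i) _

namespace Matrix

variable {l m n α : Type*} [Fintype m] [Semiring α] [PartialOrder α] [IsOrderedRing α]

lemma mul_apply_nonneg {C : Matrix l m α} {D : Matrix m n α} (hC : ∀ i j, 0 ≤ C i j)
    (hD : ∀ i j, 0 ≤ D i j) (i : l) (j : n) : 0 ≤ (C * D) i j :=
  sum_nonneg fun k _ => mul_nonneg (hC i k) (hD k j)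

lemma mul_apply_le_mul_apply {C C' : Matrix l m α} {D D' : Matrix m n α}
    (hC : ∀ i j, 0 ≤ C i j) (hCC' : ∀ i j, C i j ≤ C' i j)
    (hD : ∀ i j, 0 ≤ D i j) (hDD' : ∀ i j, D i j ≤ D' i j) (i : l) (j : n) :
    (C * D) i j ≤ (C' * D') i j :=
  sum_le_sum fun k _ => mul_le_mul (hCC' i k) (hDD' k j) (hD k j) ((hC i k).trans (hCC' i k))

lemma pow_apply_le_pow_apply [DecidableEq m] {C D : Matrix m m α} (hC : ∀ i j, 0 ≤ C i j)
    (hCD : ∀ i j, C i j ≤ D i j) (k : ℕ) (i j : m) : (C ^ k) i j ≤ (D ^ k) i j := by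
  induction k generalizing i j with
  | zero => rfl
  | succ k ih =>
    rw [pow_succ, pow_succ]
    exact mul_apply_le_mul_apply (pow_apply_nonneg hC k) ih hC hCD i j

end Matrix

section HadamardGeometricMean

variable {m : ℕ} {N : Type*} {A B : Fin m → Matrix N N ℝ} {α : Fin m → ℝ}

lemma hadGeo_nonneg (hA : ∀ k i j, 0 ≤ A k i j) (i j : N) : 0 ≤ hadGeo A α i j :=
  prod_nonneg fun k _ => Real.rpow_nonneg (hA k i j) _

variable [Fintype N]

lemma hadGeo_mul_apply_le (hA : ∀ k i j, 0 ≤ A k i j) (hB : ∀ k i j, 0 ≤ B k i j)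
    (hα : ∀ k, 0 < α k) (hsum : ∑ k, α k = 1) (i j : N) :
    (hadGeo A α * hadGeo B α) i j ≤ hadGeo (fun k => A k * B k) α i j := by
  calc (hadGeo A α * hadGeo B α) i j = ∑ l, ∏ k, (A k i l * B k l j) ^ α k := by
        simp only [mul_apply, hadGeo, ← prod_mul_distrib, Real.mul_rpow (hA _ _ _) (hB _ _ _)]
    _ ≤ ∏ k, (∑ l, A k i l * B k l j) ^ α k := Real.sum_prod_rpow_le_prod_sum_rpow _
        (fun k l => mul_nonneg (hA k i l) (hB k l j)) hα hsum
    _ = hadGeo (fun k => A k * B k) α i j := rfl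

lemma hadGeo_pow_apply_le [DecidableEq N] (hA : ∀ k i j, 0 ≤ A k i j) (hα : ∀ k, 0 < α k)
    (hsum : ∑ k, α k = 1) (n : ℕ) (i j : N) :
    (hadGeo A α ^ n) i j ≤ hadGeo (fun k => A k ^ n) α i j := by
  induction n generalizing i j with
  | zero =>
    by_cases h : i = j
    · simp [h, hadGeo]
    · exact (one_apply_ne h).trans_le (hadGeo_nonneg (fun k => pow_apply_nonneg (hA k) 0) i j)
  | succ n ih =>
    rw [pow_succ]
    calc (hadGeo A α ^ n * hadGeo A α) i j
        ≤ (hadGeo (fun k => A k ^ n) α * hadGeo A α) i j :=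
          mul_apply_le_mul_apply (pow_apply_nonneg (hadGeo_nonneg hA) n) ih (hadGeo_nonneg hA)
            (fun _ _ => le_rfl) i j
      _ ≤ hadGeo (fun k => A k ^ n * A k) α i j :=
          hadGeo_mul_apply_le (fun k => pow_apply_nonneg (hA k) n) hA hα hsum i j
      _ = hadGeo (fun k => A k ^ (n + 1)) α i j := by simp only [pow_succ]

end HadamardGeometricMean

section BanachAlgebra

variable {A : Type*} [NormedRing A] [NormedAlgebra ℂ A] [CompleteSpace A]

lemma spectralRadius_le_of_eventually_norm_pow_le {a : A} {K v : ℝ} (hv : 0 ≤ v)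
    (h : ∀ᶠ n in atTop, ‖a ^ n‖ ≤ K * v ^ n) : spectralRadius ℂ a ≤ ENNReal.ofReal v := by
  refine iSup₂_le fun z hz => ?_
  rw [← ENNReal.ofReal_coe_nnreal, coe_nnnorm]
  refine ENNReal.ofReal_le_ofReal (le_of_frequently_pow_le_mul_pow hv
    (K := K * ‖(1 : A)‖) (h.mono fun n hn => ?_).frequently)
  calc ‖z‖ ^ n = ‖z ^ n‖ := (norm_pow z n).symm
    _ ≤ ‖a ^ n‖ * ‖(1 : A)‖ := spectrum.norm_le_norm_mul_of_mem (spectrum.pow_mem_pow a n hz)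
    _ ≤ K * v ^ n * ‖(1 : A)‖ := by gcongr
    _ = K * ‖(1 : A)‖ * v ^ n := by ring

lemma eventually_norm_pow_le_of_spectralRadius_lt {a : A} {r : ℝ}
    (hr : spectralRadius ℂ a < ENNReal.ofReal r) : ∀ᶠ n in atTop, ‖a ^ n‖ ≤ r ^ n := by
  filter_upwards [(spectrum.pow_norm_pow_one_div_tendsto_nhds_spectralRadius a).eventually_lt_const
    hr, eventually_ne_atTop 0] with n hn hn0
  calc ‖a ^ n‖ = (‖a ^ n‖ ^ (1 / n : ℝ)) ^ n := by
        rw [one_div, Real.rpow_inv_natCast_pow (norm_nonneg _) hn0]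
    _ ≤ r ^ n := pow_le_pow_left₀ (by positivity) (ENNReal.ofReal_lt_ofReal_iff'.1 hn).1.le n

lemma spectralRadius_ne_top (a : A) : spectralRadius ℂ a ≠ ⊤ :=
  ne_top_of_le_ne_top (by finiteness) (spectrum.spectralRadius_le_pow_nnnorm_pow_one_div ℂ a 0)

end BanachAlgebra

namespace Matrix

variable {N 𝕜 : Type*} [Fintype N] [DecidableEq N] [RCLike 𝕜]

lemma norm_apply_le_l2_opNorm (Y : Matrix N N 𝕜) (i j : N) : ‖Y i j‖ ≤ ‖Y‖ := by
  have hcol : Y i j = toEuclideanCLM (𝕜 := 𝕜) Y (EuclideanSpace.single j 1) i := by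
    simp [mulVec, dotProduct]
  rw [hcol]
  calc _ ≤ ‖toEuclideanCLM (𝕜 := 𝕜) Y (EuclideanSpace.single j 1)‖ := PiLp.norm_apply_le _ i
    _ ≤ ‖Y‖ * ‖EuclideanSpace.single j (1 : 𝕜)‖ := (toEuclideanCLM (𝕜 := 𝕜) Y).le_opNorm _
    _ = ‖Y‖ := by rw [PiLp.norm_single, norm_one, mul_one]

lemma l2_opNorm_single_le (i j : N) (c : 𝕜) : ‖single i j c‖ ≤ ‖c‖ := by
  rw [cstar_norm_def]
  refine ContinuousLinearMap.opNorm_le_bound _ (norm_nonneg c) fun x => ?_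
  have : toEuclideanCLM (𝕜 := 𝕜) (single i j c) x = EuclideanSpace.single i (c * x j) := by
    ext i'
    simp [mulVec, dotProduct, single, ite_and, eq_comm]
  rw [this, PiLp.norm_single, norm_mul]
  exact mul_le_mul_of_nonneg_left (PiLp.norm_apply_le x j) (norm_nonneg c)

lemma l2_opNorm_le_card_sq_mul {Y : Matrix N N 𝕜} {c : ℝ} (h : ∀ i j, ‖Y i j‖ ≤ c) :
    ‖Y‖ ≤ Fintype.card N ^ 2 * c := by
  calc ‖Y‖ = ‖∑ i, ∑ j, single i j (Y i j)‖ := by rw [← matrix_eq_sum_single]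
    _ ≤ ∑ i : N, ∑ j : N, c := (norm_sum_le _ _).trans <| sum_le_sum fun i _ =>
        (norm_sum_le _ _).trans <| sum_le_sum fun j _ => (l2_opNorm_single_le i j _).trans (h i j)
    _ = Fintype.card N ^ 2 * c := by simp [sq, mul_assoc]

lemma l2_opNorm_transpose_mul_self (X : Matrix N N ℝ) : ‖Xᵀ * X‖ = ‖X‖ ^ 2 := by
  rw [sq, ← conjTranspose_eq_transpose_of_trivial, l2_opNorm_conjTranspose_mul_self]

end Matrix

section SpectralRadius

variable {N : Type*} [Fintype N] [DecidableEq N]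

lemma specRad_nonneg (C : Matrix N N ℝ) : 0 ≤ specRad C := ENNReal.toReal_nonneg

lemma map_ofReal_pow (C : Matrix N N ℝ) (n : ℕ) :
    C.map Complex.ofReal ^ n = (C ^ n).map Complex.ofReal :=
  (Matrix.map_pow C Complex.ofRealHom n).symm

lemma abs_pow_apply_le_norm_map_ofReal_pow (C : Matrix N N ℝ) (n : ℕ) (i j : N) :
    |(C ^ n) i j| ≤ ‖C.map Complex.ofReal ^ n‖ := by
  rw [map_ofReal_pow]
  simpa using norm_apply_le_l2_opNorm ((C ^ n).map Complex.ofReal) i j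

lemma specRad_le_of_eventually_abs_pow_apply_le {C : Matrix N N ℝ} {K v : ℝ} (hv : 0 ≤ v)
    (h : ∀ᶠ n in atTop, ∀ i j, |(C ^ n) i j| ≤ K * v ^ n) : specRad C ≤ v := by
  refine ENNReal.toReal_le_of_le_ofReal hv
    (spectralRadius_le_of_eventually_norm_pow_le hv (K := Fintype.card N ^ 2 * K) ?_)
  filter_upwards [h] with n hn
  rw [map_ofReal_pow, mul_assoc]
  exact l2_opNorm_le_card_sq_mul fun i j => by simpa using hn i j

lemma eventually_abs_pow_apply_le_of_specRad_lt {C : Matrix N N ℝ} {r : ℝ} (hr : specRad C < r) :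
    ∀ᶠ n in atTop, ∀ i j, |(C ^ n) i j| ≤ r ^ n := by
  have hr' : spectralRadius ℂ (C.map Complex.ofReal) < ENNReal.ofReal r :=
    (ENNReal.lt_ofReal_iff_toReal_lt (spectralRadius_ne_top _)).2 hr
  filter_upwards [eventually_norm_pow_le_of_spectralRadius_lt hr'] with n hn i j
  exact (abs_pow_apply_le_norm_map_ofReal_pow C n i j).trans hn

lemma specRad_le_specRad_of_apply_le {C D : Matrix N N ℝ} (hC : ∀ i j, 0 ≤ C i j)
    (hCD : ∀ i j, C i j ≤ D i j) : specRad C ≤ specRad D := by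
  refine le_of_forall_gt_imp_ge_of_dense fun r hr => specRad_le_of_eventually_abs_pow_apply_le
    (K := 1) ((specRad_nonneg D).trans hr.le) ?_
  filter_upwards [eventually_abs_pow_apply_le_of_specRad_lt hr] with n hn i j
  rw [one_mul, abs_of_nonneg (pow_apply_nonneg hC n i j)]
  exact (pow_apply_le_pow_apply hC hCD n i j).trans ((le_abs_self _).trans (hn i j))

lemma l2_opNorm_le_specRad_of_isSymm {M : Matrix N N ℝ} (hM : M.IsSymm) : ‖M‖ ≤ specRad M := by
  have hMsa : IsSelfAdjoint M := isHermitian_iff_isSymm.2 hM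
  refine le_of_forall_gt_imp_ge_of_dense fun r hr => le_of_frequently_pow_le_mul_pow
    (K := Fintype.card N ^ 2) ((specRad_nonneg M).trans hr.le) ?_
  refine (tendsto_pow_atTop_atTop_of_one_lt one_lt_two).frequently
    ((tendsto_pow_atTop_atTop_of_one_lt one_lt_two).eventually
      (eventually_abs_pow_apply_le_of_specRad_lt hr) |>.mono fun k hk => ?_).frequently
  rw [← hMsa.norm_pow_two_pow]
  exact l2_opNorm_le_card_sq_mul hk

end SpectralRadius

lemma specRad_hadGeo_le_prod_rpow {m : ℕ} {N : Type*} [Fintype N] [DecidableEq N]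
    {A : Fin m → Matrix N N ℝ} (hA : ∀ k i j, 0 ≤ A k i j) {α : Fin m → ℝ} (hα : ∀ k, 0 < α k)
    (hsum : ∑ k, α k = 1) : specRad (hadGeo A α) ≤ ∏ k, ‖A k‖ ^ α k := by
  refine specRad_le_of_eventually_abs_pow_apply_le (K := 1)
    (prod_nonneg fun k _ => Real.rpow_nonneg (norm_nonneg _) _) ?_
  filter_upwards [eventually_gt_atTop 0] with n hn i j
  rw [one_mul, abs_of_nonneg (pow_apply_nonneg (hadGeo_nonneg hA) n i j), ← prod_pow]
  refine (hadGeo_pow_apply_le hA hα hsum n i j).trans <| prod_le_prod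
    (fun k _ => Real.rpow_nonneg (pow_apply_nonneg (hA k) n i j) _) fun k _ => ?_
  have hentry : (A k ^ n) i j ≤ ‖A k‖ ^ n :=
    (Real.le_norm_self _).trans <| (norm_apply_le_l2_opNorm _ i j).trans (norm_pow_le' _ hn)
  rw [Real.rpow_pow_comm (norm_nonneg _)]
  exact Real.rpow_le_rpow (pow_apply_nonneg (hA k) n i j) hentry (hα k).le

theorem stmt11_general {m : ℕ} {N : Type*} [Fintype N] [DecidableEq N]
    (A : Fin m → Matrix N N ℝ) (hA : ∀ k, ∀ i j, 0 ≤ A k i j)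
    (α : Fin m → ℝ) (hα : ∀ k, 0 < α k) (hsum : ∑ k, α k = 1) :
    l2OpNorm (hadGeo A α) ≤
        specRad (hadGeo (fun k => (A k)ᵀ * A k) α) ^ ((1 : ℝ) / 2) ∧
      specRad (hadGeo (fun k => (A k)ᵀ * A k) α) ^ ((1 : ℝ) / 2) ≤
        ∏ k, l2OpNorm (A k) ^ (α k) := by
  set B := hadGeo A α
  set G := hadGeo (fun k => (A k)ᵀ * A k) α
  have hAt : ∀ k i j, 0 ≤ (A k)ᵀ i j := fun k i j => hA k j i
  have hB : ‖B‖ ^ 2 ≤ specRad G := calc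
    ‖B‖ ^ 2 = ‖Bᵀ * B‖ := (l2_opNorm_transpose_mul_self B).symm
    _ ≤ specRad (Bᵀ * B) := l2_opNorm_le_specRad_of_isSymm (isSymm_transpose_mul_self B)
    _ ≤ specRad G := specRad_le_specRad_of_apply_le
        (mul_apply_nonneg (hadGeo_nonneg hAt) (hadGeo_nonneg hA))
        (hadGeo_mul_apply_le hAt hA hα hsum)
  have hG : specRad G ≤ (∏ k, ‖A k‖ ^ α k) ^ 2 := calc
    specRad G ≤ ∏ k, ‖(A k)ᵀ * A k‖ ^ α k := specRad_hadGeo_le_prod_rpow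
        (fun k => mul_apply_nonneg (hAt k) (hA k)) hα hsum
    _ = (∏ k, ‖A k‖ ^ α k) ^ 2 := by
        simp only [l2_opNorm_transpose_mul_self, ← prod_pow, Real.rpow_pow_comm (norm_nonneg _)]
  rw [← Real.sqrt_eq_rpow]
  exact ⟨Real.le_sqrt_of_sq_le hB, Real.sqrt_le_iff.2
    ⟨prod_nonneg fun k _ => Real.rpow_nonneg (norm_nonneg _) _, hG⟩⟩

theorem stmt11 {m : ℕ} (hm : 0 < m) {N : Type*} [Fintype N] [DecidableEq N]
    (A : Fin m → Matrix N N ℝ) (hA : ∀ k, ∀ i j, 0 ≤ A k i j)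
    (α : Fin m → ℝ) (hα : ∀ k, 0 < α k) (hsum : ∑ k, α k = 1) :
    l2OpNorm (hadGeo A α) ≤
        specRad (hadGeo (fun k => (A k)ᵀ * A k) α) ^ ((1 : ℝ) / 2) ∧
      specRad (hadGeo (fun k => (A k)ᵀ * A k) α) ^ ((1 : ℝ) / 2) ≤
        ∏ k, l2OpNorm (A k) ^ (α k) :=
  stmt11_general A hA α hα hsum
end
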